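/- arXiv:1506.05170 — 2 statements merged into one kernel-verified Lean document; each statement's English description precedes it below -/
import Mathlib

section
/- Let f : ℝⁿ → ℝ∪{+∞} be a symmetric function. Then for every α > 0 and every symmetric matrix X ∈ Sⁿ, the Moreau envelope satisfies (f∘λ)_α(X) = f_α(λ(X)). -/
open Matrix

/-- The vector of eigenvalues of a symmetric matrix, listed in nonincreasing order
(junk value `0` for non-Hermitian matrices). -/
noncomputable def eigd {n : ℕ} (X : Matrix (Fin n) (Fin n) ℝ) : Fin n → ℝ :=
  if h : X.IsHermitian then
    fun i => h.eigenvalues (Tuple.sort h.eigenvalues i.rev)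
  else 0

/-- A function on `ℝⁿ` is symmetric if it is invariant under coordinate permutations. -/
def IsSymmFn {n : ℕ} (f : (Fin n → ℝ) → EReal) : Prop :=
  ∀ (π : Equiv.Perm (Fin n)) (x : Fin n → ℝ), f (fun i => x (π i)) = f x

/-- Moreau envelope on `ℝⁿ` (Euclidean norm). -/
noncomputable def mEnvV {n : ℕ} (f : (Fin n → ℝ) → EReal) (α : ℝ) (x : Fin n → ℝ) : EReal :=
  ⨅ y : Fin n → ℝ, f y + (((∑ i, (y i - x i) ^ 2) / (2 * α) : ℝ) : EReal)

/-- Proximal mapping on `ℝⁿ` (Euclidean norm). -/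
def proxV {n : ℕ} (f : (Fin n → ℝ) → EReal) (α : ℝ) (x : Fin n → ℝ) : Set (Fin n → ℝ) :=
  {y | ∀ z, f y + (((∑ i, (y i - x i) ^ 2) / (2 * α) : ℝ) : EReal)
      ≤ f z + (((∑ i, (z i - x i) ^ 2) / (2 * α) : ℝ) : EReal)}

/-- Moreau envelope of the spectral function `f ∘ λ` on the space of symmetric
matrices, with respect to the Frobenius norm. -/
noncomputable def mEnvS {n : ℕ} (f : (Fin n → ℝ) → EReal) (α : ℝ)
    (X : Matrix (Fin n) (Fin n) ℝ) : EReal :=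
  ⨅ Y : {Y : Matrix (Fin n) (Fin n) ℝ // Y.IsHermitian},
    f (eigd Y.1) + (((((Y.1 - X)ᵀ * (Y.1 - X)).trace) / (2 * α) : ℝ) : EReal)

/-- Proximal mapping of the spectral function `f ∘ λ` on the space of symmetric
matrices, with respect to the Frobenius norm. -/
def proxS {n : ℕ} (f : (Fin n → ℝ) → EReal) (α : ℝ)
    (X : Matrix (Fin n) (Fin n) ℝ) : Set (Matrix (Fin n) (Fin n) ℝ) :=
  {Y | Y.IsHermitian ∧ ∀ Z : Matrix (Fin n) (Fin n) ℝ, Z.IsHermitian →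
    f (eigd Y) + ((((Y - X)ᵀ * (Y - X)).trace / (2 * α) : ℝ) : EReal)
      ≤ f (eigd Z) + ((((Z - X)ᵀ * (Z - X)).trace / (2 * α) : ℝ) : EReal)}

/-! Write `X = U diag(λ(X)) Uᵀ` with `U` orthogonal. For `y ∈ ℝⁿ`, the matrix `U diag(y) Uᵀ`
has eigenvalues a permutation of `y` and lies at Frobenius distance `|y - λ(X)|` from `X`, so by
symmetry of `f` it shows `(f∘λ)_α(X) ≤ f_α(λ(X))`. Conversely, for symmetric `Y` the point `λ(Y)`
is as good a competitor for `f_α(λ(X))` as `Y` is for `(f∘λ)_α(X)`, by the Hoffman–Wielandt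
inequality `|λ(Y) - λ(X)| ≤ ‖Y - X‖`. This reduces to von Neumann's trace inequality
`tr(AB) ≤ ⟨λ(A), λ(B)⟩`: writing `A = U diag(a) Uᵀ`, `B = V diag(b) Vᵀ`, the trace is `⟨a, S b⟩`
for the doubly stochastic matrix `S` of squared entries of `UᵀV`, and by Birkhoff's theorem and
the rearrangement inequality `⟨a, S b⟩ ≤ ⟨a, b⟩` for sorted `a`, `b`. -/

theorem Equiv.Perm.exists_eq_comp_of_map_univ_eq {ι α : Type*} [Fintype ι] [DecidableEq α]
    {v w : ι → α} (h : Finset.univ.val.map v = Finset.univ.val.map w) :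
    ∃ σ : Equiv.Perm ι, v = w ∘ σ := by
  have hfiber (c : α) : Fintype.card {i // v i = c} = Fintype.card {i // w i = c} := by
    have := congrArg (Multiset.count c) h
    simp only [Multiset.count_map] at this
    simp only [Fintype.card_subtype, Finset.card, Finset.filter_val]
    simpa only [eq_comm] using this
  let σ : ι ≃ ι := Equiv.ofFiberEquiv fun c => Fintype.equivOfCardEq (hfiber c)
  exact ⟨σ, funext fun i => (Equiv.ofFiberEquiv_map _ i).symm⟩

namespace Matrix

variable {ι : Type*} [Fintype ι] [DecidableEq ι] {U : Matrix ι ι ℝ}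

theorem dotProduct_mulVec_le_of_mem_doublyStochastic {S : Matrix ι ι ℝ}
    (hS : S ∈ doublyStochastic ℝ ι) {a b : ι → ℝ} (hab : Monovary a b) :
    a ⬝ᵥ (S *ᵥ b) ≤ a ⬝ᵥ b := by
  obtain ⟨w, hw0, hw1, rfl⟩ := exists_eq_sum_perm_of_mem_doublyStochastic hS
  have hperm (σ : Equiv.Perm ι) : a ⬝ᵥ (σ.permMatrix ℝ *ᵥ b) ≤ a ⬝ᵥ b := by
    rw [permMatrix_mulVec]
    simpa [dotProduct] using hab.sum_mul_comp_perm_le_sum_mul (σ := σ)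
  calc a ⬝ᵥ ((∑ σ, w σ • σ.permMatrix ℝ) *ᵥ b)
      = ∑ σ, w σ * a ⬝ᵥ (σ.permMatrix ℝ *ᵥ b) := by
        simp [sum_mulVec, smul_mulVec, dotProduct_sum]
    _ ≤ ∑ σ, w σ * a ⬝ᵥ b := by gcongr with σ; exacts [hw0 σ, hperm σ]
    _ = a ⬝ᵥ b := by rw [← Finset.sum_mul, hw1, one_mul]

theorem of_sq_mem_doublyStochastic_of_mem_unitaryGroup (hU : U ∈ unitaryGroup ι ℝ) :
    of (fun i j => U i j ^ 2) ∈ doublyStochastic ℝ ι := by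
  rw [mem_doublyStochastic_iff_sum]
  refine ⟨fun i j => sq_nonneg _, fun i => ?_, fun j => ?_⟩
  · simpa [mul_apply, sq] using congrFun₂ (mem_unitaryGroup_iff.1 hU) i i
  · simpa [mul_apply, sq] using congrFun₂ (mem_unitaryGroup_iff'.1 hU) j j

theorem isHermitian_conj_diagonal (U : Matrix ι ι ℝ) (d : ι → ℝ) :
    (U * diagonal d * star U).IsHermitian :=
  isHermitian_mul_mul_conjTranspose U (isHermitian_diagonal d)

theorem charpoly_unitary_conj (hU : U ∈ unitaryGroup ι ℝ) (M : Matrix ι ι ℝ) :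
    (U * M * star U).charpoly = M.charpoly := by
  rw [charpoly_mul_comm, ← mul_assoc, mem_unitaryGroup_iff'.1 hU, one_mul]

theorem IsHermitian.exists_eigenvalues_eq_comp_of_eq_conj_diagonal {Y : Matrix ι ι ℝ}
    (hY : Y.IsHermitian) (hU : U ∈ unitaryGroup ι ℝ) {d : ι → ℝ}
    (hYd : Y = U * diagonal d * star U) :
    ∃ σ : Equiv.Perm ι, hY.eigenvalues = d ∘ σ := by
  apply Equiv.Perm.exists_eq_comp_of_map_univ_eq
  have hroots : Y.charpoly.roots = Finset.univ.val.map d := by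
    rw [hYd, charpoly_unitary_conj hU, charpoly_diagonal, Finset.prod_eq_multiset_prod,
      ← Polynomial.roots_multiset_prod_X_sub_C (Finset.univ.val.map d), Multiset.map_map]
    rfl
  simpa [hroots] using hY.roots_charpoly_eq_eigenvalues.symm

theorem trace_transpose_mul_self_conj_diagonal (hU : U ∈ unitaryGroup ι ℝ) (d : ι → ℝ) :
    ((U * diagonal d * star U)ᵀ * (U * diagonal d * star U)).trace = ∑ i, d i ^ 2 := by
  have hUU : star U * U = 1 := mem_unitaryGroup_iff'.1 hU
  rw [← conjTranspose_eq_transpose_of_trivial, (isHermitian_conj_diagonal U d).eq,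
    show U * diagonal d * star U * (U * diagonal d * star U)
      = U * (diagonal d * (star U * U) * diagonal d) * star U by simp only [mul_assoc],
    hUU, mul_one, trace_mul_cycle, hUU, one_mul, diagonal_mul_diagonal, trace_diagonal]
  simp only [sq]

theorem submatrix_conj_diagonal_comp (U : Matrix ι ι ℝ) (d : ι → ℝ) (σ : Equiv.Perm ι) :
    U.submatrix id σ * diagonal (d ∘ σ) * star (U.submatrix id σ) = U * diagonal d * star U := by
  rw [star_eq_conjTranspose, conjTranspose_submatrix, ← submatrix_diagonal_equiv,
    submatrix_mul_equiv, submatrix_mul_equiv, star_eq_conjTranspose, submatrix_id_id]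

theorem submatrix_mem_unitaryGroup (hU : U ∈ unitaryGroup ι ℝ) (σ : Equiv.Perm ι) :
    U.submatrix id σ ∈ unitaryGroup ι ℝ := by
  rw [mem_unitaryGroup_iff, star_eq_conjTranspose, conjTranspose_submatrix, submatrix_mul_equiv,
    ← star_eq_conjTranspose, mem_unitaryGroup_iff.1 hU, submatrix_id_id]

theorem trace_conj_diagonal_mul_conj_diagonal (U V : Matrix ι ι ℝ) (a b : ι → ℝ) :
    ((U * diagonal a * star U) * (V * diagonal b * star V)).trace
      = a ⬝ᵥ (of (fun i j => (star U * V) i j ^ 2) *ᵥ b) := by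
  have hcycle : ((U * diagonal a * star U) * (V * diagonal b * star V)).trace
      = (diagonal a * ((star U * V) * diagonal b * star (star U * V))).trace := by
    simp only [star_mul, star_star, mul_assoc]
    rw [trace_mul_comm U]
    simp only [mul_assoc]
  rw [hcycle]
  generalize star U * V = W
  simp only [trace, diag_apply, diagonal_mul, dotProduct, mulVec, of_apply]
  refine Finset.sum_congr rfl fun i _ => ?_
  rw [mul_apply]
  simp only [mul_diagonal, star_apply, star_trivial]
  refine congrArg _ (Finset.sum_congr rfl fun j _ => ?_)
  ring

end Matrix

section SortedEigenvalues

variable {n : ℕ}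

theorem eigd_of_isHermitian {X : Matrix (Fin n) (Fin n) ℝ} (hX : X.IsHermitian) :
    eigd X = hX.eigenvalues ∘ (Fin.revPerm.trans (Tuple.sort hX.eigenvalues)) := by
  rw [eigd, dif_pos hX]
  rfl

theorem antitone_eigd (X : Matrix (Fin n) (Fin n) ℝ) : Antitone (eigd X) := by
  unfold eigd
  split_ifs with hX
  · exact fun i j hij => Tuple.monotone_sort hX.eigenvalues (Fin.rev_le_rev.2 hij)
  · exact antitone_const

theorem Matrix.IsHermitian.exists_unitary_eq_conj_diagonal_eigd {A : Matrix (Fin n) (Fin n) ℝ}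
    (hA : A.IsHermitian) : ∃ U ∈ unitaryGroup (Fin n) ℝ, A = U * diagonal (eigd A) * star U := by
  rw [eigd_of_isHermitian hA]
  refine ⟨_, submatrix_mem_unitaryGroup hA.eigenvectorUnitary.2
    (Fin.revPerm.trans (Tuple.sort hA.eigenvalues)), ?_⟩
  rw [submatrix_conj_diagonal_comp]
  simpa [Unitary.conjStarAlgAut_apply] using hA.spectral_theorem

theorem trace_mul_le_eigd_dotProduct_eigd {A B : Matrix (Fin n) (Fin n) ℝ} (hA : A.IsHermitian)
    (hB : B.IsHermitian) : (A * B).trace ≤ eigd A ⬝ᵥ eigd B := by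
  obtain ⟨U, hU, hAU⟩ := hA.exists_unitary_eq_conj_diagonal_eigd
  obtain ⟨V, hV, hBV⟩ := hB.exists_unitary_eq_conj_diagonal_eigd
  have hW : star U * V ∈ unitaryGroup (Fin n) ℝ := mul_mem (Unitary.star_mem hU) hV
  calc (A * B).trace = eigd A ⬝ᵥ (of (fun i j => (star U * V) i j ^ 2) *ᵥ eigd B) := by
        conv_lhs => rw [hAU, hBV]
        exact trace_conj_diagonal_mul_conj_diagonal U V _ _
    _ ≤ eigd A ⬝ᵥ eigd B := dotProduct_mulVec_le_of_mem_doublyStochastic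
        (of_sq_mem_doublyStochastic_of_mem_unitaryGroup hW)
        ((antitone_eigd A).monovary (antitone_eigd B))

theorem trace_transpose_mul_self_eq_sum_eigd_sq {A : Matrix (Fin n) (Fin n) ℝ}
    (hA : A.IsHermitian) : (Aᵀ * A).trace = ∑ i, eigd A i ^ 2 := by
  obtain ⟨U, hU, hAU⟩ := hA.exists_unitary_eq_conj_diagonal_eigd
  conv_lhs => rw [hAU]
  exact trace_transpose_mul_self_conj_diagonal hU _

theorem sum_sq_eigd_sub_le_trace {A B : Matrix (Fin n) (Fin n) ℝ} (hA : A.IsHermitian)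
    (hB : B.IsHermitian) : ∑ i, (eigd B i - eigd A i) ^ 2 ≤ ((B - A)ᵀ * (B - A)).trace := by
  have hAt : Aᵀ = A := by rw [← conjTranspose_eq_transpose_of_trivial]; exact hA
  have hBt : Bᵀ = B := by rw [← conjTranspose_eq_transpose_of_trivial]; exact hB
  have hexpand : ((B - A)ᵀ * (B - A)).trace
      = (Bᵀ * B).trace + (Aᵀ * A).trace - 2 * (A * B).trace := by
    rw [transpose_sub, hAt, hBt, sub_mul, mul_sub, mul_sub, trace_sub, trace_sub, trace_sub,
      trace_mul_comm B A]
    ring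
  have hsq : ∑ i, (eigd B i - eigd A i) ^ 2
      = ∑ i, eigd B i ^ 2 + ∑ i, eigd A i ^ 2 - 2 * eigd A ⬝ᵥ eigd B := by
    rw [dotProduct, Finset.mul_sum, ← Finset.sum_add_distrib, ← Finset.sum_sub_distrib]
    exact Finset.sum_congr rfl fun i _ => by ring
  rw [hexpand, hsq, trace_transpose_mul_self_eq_sum_eigd_sq hA,
    trace_transpose_mul_self_eq_sum_eigd_sq hB]
  linarith [trace_mul_le_eigd_dotProduct_eigd hA hB]

theorem mEnvS_le_of_isSymmFn {f : (Fin n → ℝ) → EReal} (hsym : IsSymmFn f) (α : ℝ)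
    {X : Matrix (Fin n) (Fin n) ℝ} (hX : X.IsHermitian) (y : Fin n → ℝ) :
    mEnvS f α X ≤ f y + (((∑ i, (y i - eigd X i) ^ 2) / (2 * α) : ℝ) : EReal) := by
  obtain ⟨U, hU, hXU⟩ := hX.exists_unitary_eq_conj_diagonal_eigd
  set Y := U * diagonal y * star U
  have hY : Y.IsHermitian := isHermitian_conj_diagonal U y
  have hfY : f (eigd Y) = f y := by
    obtain ⟨σ, hσ⟩ := hY.exists_eigenvalues_eq_comp_of_eq_conj_diagonal hU rfl
    rw [eigd_of_isHermitian hY, hσ]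
    exact hsym ((Fin.revPerm.trans (Tuple.sort (y ∘ σ))).trans σ) y
  have hdist : ((Y - X)ᵀ * (Y - X)).trace = ∑ i, (y i - eigd X i) ^ 2 := by
    conv_lhs => rw [hXU, ← sub_mul, ← mul_sub, diagonal_sub]
    exact trace_transpose_mul_self_conj_diagonal hU _
  calc mEnvS f α X ≤ f (eigd Y) + ((((Y - X)ᵀ * (Y - X)).trace / (2 * α) : ℝ) : EReal) :=
        iInf_le_of_le ⟨Y, hY⟩ le_rfl
    _ = _ := by rw [hfY, hdist]

theorem mEnvV_eigd_le (f : (Fin n → ℝ) → EReal) {α : ℝ} (hα : 0 ≤ α)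
    {X Y : Matrix (Fin n) (Fin n) ℝ} (hX : X.IsHermitian) (hY : Y.IsHermitian) :
    mEnvV f α (eigd X) ≤ f (eigd Y) + ((((Y - X)ᵀ * (Y - X)).trace / (2 * α) : ℝ) : EReal) := by
  refine iInf_le_of_le (eigd Y) (add_le_add_right (EReal.coe_le_coe_iff.2 ?_) _)
  gcongr
  exact sum_sq_eigd_sub_le_trace hX hY

end SortedEigenvalues

/-- For a symmetric `f : ℝⁿ → ℝ ∪ {+∞}`, `α > 0` and a symmetric matrix `X`,
the Moreau envelope satisfies `(f∘λ)_α(X) = f_α(λ(X))`. -/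
theorem statement9 {n : ℕ} (f : (Fin n → ℝ) → EReal) (hsym : IsSymmFn f)
    (α : ℝ) (hα : 0 < α) (X : Matrix (Fin n) (Fin n) ℝ) (hX : X.IsHermitian) :
    mEnvS f α X = mEnvV f α (eigd X) :=
  le_antisymm (le_iInf fun y => mEnvS_le_of_isSymmFn hsym α hX y)
    (le_iInf fun Y => mEnvV_eigd_le f hα.le hX Y.2)
end

section
/- Let f : ℝⁿ → ℝ∪{+∞} be lower semicontinuous, symmetric, and lower-bounded, and let X ∈ Sⁿ with f(λ(X)) finite. If v ∈ ℝⁿ is a Fréchet subgradient of f at λ(X) and U is orthogonal with U(Diag λ(X))Uᵀ = X, then V := U(Diag v)Uᵀ is a Fréchet subgradient of f∘λ at X. -/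
/-!
Write `X = U diag(x) Uᵀ` and `Y = W diag(μ) Wᵀ` with `μ = λ(Y)`, and let `S` be the doubly
stochastic matrix of squared entries of `UᵀW`. Both `‖Y - X‖²` and `⟨V, Y - X⟩` are linear in `S`,
so by Birkhoff's theorem they are controlled by their values at permutation matrices. At a
permutation `p`, a gap argument on the distinct values of `x` shows that `⟨v, μ ∘ p - x⟩` exceeds
`⟨v, μ ∘ π - x⟩` by at most `K ‖μ ∘ p - x‖²` for some `π` fixing `x`. Hence
`⟨V, Y - X⟩ - K ‖Y - X‖² ≤ ⟨v, μ ∘ π - x⟩` with `‖μ ∘ π - x‖ ≤ ‖Y - X‖` (Hoffman–Wielandt, again via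
Birkhoff), and the Fréchet inequality for `f` at `μ ∘ π`, where `f` equals `f(μ)` by symmetry,
gives the one for `f ∘ λ`.
-/

open Matrix

/-- Fréchet subgradient of `f : ℝⁿ → ℝ ∪ {+∞}` at `x` (Euclidean structure):
`f(y) ≥ f(x) + ⟨v, y−x⟩ + o(‖y−x‖)`. -/
def FSubV {n : ℕ} (f : (Fin n → ℝ) → EReal) (x v : Fin n → ℝ) : Prop :=
  ∀ ε : ℝ, 0 < ε → ∃ δ : ℝ, 0 < δ ∧ ∀ y : Fin n → ℝ,
    Real.sqrt (∑ i, (y i - x i) ^ 2) ≤ δ →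
    f x + (((∑ i, v i * (y i - x i)) - ε * Real.sqrt (∑ i, (y i - x i) ^ 2) : ℝ) : EReal)
      ≤ f y

/-- Fréchet subgradient of a function on the symmetric matrices at a symmetric matrix
`X`, with respect to the trace inner product and the Frobenius norm. -/
def FSubM {n : ℕ} (F : Matrix (Fin n) (Fin n) ℝ → EReal)
    (X V : Matrix (Fin n) (Fin n) ℝ) : Prop :=
  ∀ ε : ℝ, 0 < ε → ∃ δ : ℝ, 0 < δ ∧ ∀ Y : Matrix (Fin n) (Fin n) ℝ, Y.IsHermitian →
    Real.sqrt (((Y - X)ᵀ * (Y - X)).trace) ≤ δ →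
    F X + (((V * (Y - X)).trace - ε * Real.sqrt (((Y - X)ᵀ * (Y - X)).trace) : ℝ) : EReal)
      ≤ F Y

open Finset

theorem eigd_antitone {n : ℕ} {X : Matrix (Fin n) (Fin n) ℝ} (hX : X.IsHermitian) :
    Antitone (eigd X) := fun _ _ hij => by
  rw [eigd, dif_pos hX]
  exact Tuple.monotone_sort hX.eigenvalues (Fin.rev_le_rev.mpr hij)

theorem exists_orthogonal_eq_eigd {n : ℕ} {Y : Matrix (Fin n) (Fin n) ℝ} (hY : Y.IsHermitian) :
    ∃ W : Matrix (Fin n) (Fin n) ℝ, W * Wᵀ = 1 ∧ Y = W * diagonal (eigd Y) * Wᵀ := by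
  set V : Matrix (Fin n) (Fin n) ℝ := ↑hY.eigenvectorUnitary
  have hV : V * Vᵀ = 1 := Unitary.mul_star_self_of_mem hY.eigenvectorUnitary.2
  have hYV : Y = V * diagonal hY.eigenvalues * Vᵀ := by
    simpa [Unitary.conjStarAlgAut_apply, star_eq_conjTranspose] using hY.spectral_theorem
  set e : Fin n ≃ Fin n := Fin.revPerm.trans (Tuple.sort hY.eigenvalues)
  have he : eigd Y = hY.eigenvalues ∘ e := by
    rw [eigd, dif_pos hY]
    rfl
  refine ⟨V.submatrix id e, by rw [transpose_submatrix, submatrix_mul_transpose_submatrix, hV], ?_⟩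
  rw [he, ← submatrix_diagonal_equiv, transpose_submatrix, submatrix_mul_equiv,
    submatrix_mul_equiv, submatrix_id_id, ← hYV]

section Conjugation

variable {ι : Type*} [Fintype ι] [DecidableEq ι] {U W : Matrix ι ι ℝ}

theorem transpose_mul_sub_mul_eq (hU : U * Uᵀ = 1) (hW : W * Wᵀ = 1) (x μ : ι → ℝ) :
    Uᵀ * (W * diagonal μ * Wᵀ - U * diagonal x * Uᵀ) * W
      = of fun k l => (μ l - x k) * (Uᵀ * W) k l := by
  have hU' : Uᵀ * U = 1 := mul_eq_one_comm.mp hU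
  have hW' : Wᵀ * W = 1 := mul_eq_one_comm.mp hW
  have : Uᵀ * (W * diagonal μ * Wᵀ - U * diagonal x * Uᵀ) * W
      = (Uᵀ * W) * diagonal μ - diagonal x * (Uᵀ * W) := by
    simp only [Matrix.mul_sub, Matrix.sub_mul, Matrix.mul_assoc, hW', ← Matrix.mul_assoc Uᵀ U, hU',
      Matrix.mul_one, Matrix.one_mul]
  rw [this]
  ext k l
  simp only [Matrix.sub_apply, mul_diagonal, diagonal_mul, of_apply]
  ring

theorem trace_transpose_mul_self_sub_eq (hU : U * Uᵀ = 1) (hW : W * Wᵀ = 1) (x μ : ι → ℝ) :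
    ((W * diagonal μ * Wᵀ - U * diagonal x * Uᵀ)ᵀ *
        (W * diagonal μ * Wᵀ - U * diagonal x * Uᵀ)).trace
      = ∑ k, ∑ l, (μ l - x k) ^ 2 * (Uᵀ * W) k l ^ 2 := by
  set A := W * diagonal μ * Wᵀ - U * diagonal x * Uᵀ
  have : (Aᵀ * A).trace = ((Uᵀ * A * W)ᵀ * (Uᵀ * A * W)).trace := by
    simp only [transpose_mul, transpose_transpose, Matrix.mul_assoc]
    rw [← Matrix.mul_assoc U, hU, Matrix.one_mul, trace_mul_comm Wᵀ, Matrix.mul_assoc,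
      Matrix.mul_assoc, hW, Matrix.mul_one]
  rw [this, transpose_mul_sub_mul_eq hU hW]
  set Q := Uᵀ * W
  simp only [trace, diag_apply, mul_apply, transpose_apply, of_apply]
  rw [sum_comm]
  exact sum_congr rfl fun k _ => sum_congr rfl fun l _ => by ring

theorem trace_conj_diagonal_mul_sub_eq (hU : U * Uᵀ = 1) (hW : W * Wᵀ = 1) (x μ v : ι → ℝ) :
    (U * diagonal v * Uᵀ * (W * diagonal μ * Wᵀ - U * diagonal x * Uᵀ)).trace
      = ∑ k, ∑ l, v k * (μ l - x k) * (Uᵀ * W) k l ^ 2 := by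
  set A := W * diagonal μ * Wᵀ - U * diagonal x * Uᵀ
  have : (U * diagonal v * Uᵀ * A).trace = (diagonal v * ((Uᵀ * A * W) * (Uᵀ * W)ᵀ)).trace := by
    rw [transpose_mul, transpose_transpose]
    simp only [Matrix.mul_assoc]
    rw [← Matrix.mul_assoc W Wᵀ, hW, Matrix.one_mul, trace_mul_comm U]
    simp only [Matrix.mul_assoc]
  rw [this, transpose_mul_sub_mul_eq hU hW]
  set Q := Uᵀ * W
  simp only [trace, diag_apply, diagonal_mul]
  simp only [mul_apply, transpose_apply, of_apply, mul_sum]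
  exact sum_congr rfl fun k _ => sum_congr rfl fun l _ => by ring

end Conjugation

section DoublyStochastic

variable {ι : Type*} [Fintype ι] [DecidableEq ι]

theorem sq_entries_mem_doublyStochastic {Q : Matrix ι ι ℝ} (hQ : Q * Qᵀ = 1) :
    of (fun i j => Q i j ^ 2) ∈ doublyStochastic ℝ ι := by
  have hQ' : Qᵀ * Q = 1 := mul_eq_one_comm.mp hQ
  refine mem_doublyStochastic_iff_sum.mpr ⟨fun i j => sq_nonneg _, fun i => ?_, fun j => ?_⟩
  · simpa [mul_apply, sq] using congr_fun₂ hQ i i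
  · simpa [mul_apply, sq] using congr_fun₂ hQ' j j

theorem exists_perm_sum_mul_le_of_mem_doublyStochastic
    {S : Matrix ι ι ℝ} (hS : S ∈ doublyStochastic ℝ ι) (c : ι → ι → ℝ) :
    ∃ σ : Equiv.Perm ι, ∑ i, ∑ j, c i j * S i j ≤ ∑ i, c i (σ i) := by
  have hL : IsLinearMap ℝ fun M : Matrix ι ι ℝ => ∑ i, ∑ j, c i j * M i j :=
    ⟨fun A B => by simp only [Matrix.add_apply, mul_add, sum_add_distrib],
      fun r A => by simp only [Matrix.smul_apply, smul_eq_mul, mul_sum, mul_left_comm]⟩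
  rw [← SetLike.mem_coe, doublyStochastic_eq_convexHull_permMatrix] at hS
  obtain ⟨_, ⟨σ, rfl⟩, hσ⟩ :=
    ((hL.mk' _).convexOn convex_univ).exists_ge_of_mem_convexHull (Set.subset_univ _) hS
  refine ⟨σ, hσ.trans_eq ?_⟩
  simp [PEquiv.toMatrix_apply, Equiv.toPEquiv_apply]

end DoublyStochastic

theorem exists_pos_forall_ne_le_abs_sub {ι : Type*} [Fintype ι] (x : ι → ℝ) :
    ∃ γ > 0, ∀ i j, x i ≠ x j → γ ≤ |x i - x j| := by
  rcases (univ.filter fun q : ι × ι => x q.1 ≠ x q.2).eq_empty_or_nonempty with h | h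
  · refine ⟨1, one_pos, fun i j hij => absurd hij ?_⟩
    simpa using filter_eq_empty_iff.mp h (mem_univ (i, j))
  · obtain ⟨q, hq, hmin⟩ := exists_min_image _ (fun q : ι × ι => |x q.1 - x q.2|) h
    exact ⟨_, abs_sub_pos.mpr (mem_filter.mp hq).2, fun i j hij => hmin (i, j) (by simpa using hij)⟩

section FixingPerm

variable {ι : Type*} [Fintype ι] {x μ : ι → ℝ}

theorem sum_sq_sub_le_sum_sq_comp_perm_sub [LinearOrder ι] (hx : Antitone x) (hμ : Antitone μ)
    (p : Equiv.Perm ι) : ∑ i, (μ i - x i) ^ 2 ≤ ∑ i, (μ (p i) - x i) ^ 2 := by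
  have expand : ∀ q : ι → ℝ,
      ∑ i, (q i - x i) ^ 2 = ∑ i, q i ^ 2 - 2 * ∑ i, x i * q i + ∑ i, x i ^ 2 := fun q => by
    simp only [mul_sum, ← sum_sub_distrib, ← sum_add_distrib]
    exact sum_congr rfl fun i _ => by ring
  have hmul : ∑ i, x i * μ (p i) ≤ ∑ i, x i * μ i :=
    (hx.monovary hμ).sum_mul_comp_perm_le_sum_mul
  have hsq : ∑ i, μ (p i) ^ 2 = ∑ i, μ i ^ 2 := Equiv.sum_comp p fun i => μ i ^ 2
  rw [expand μ, expand fun i => μ (p i), hsq]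
  linarith

theorem exists_fixing_perm_sum_mul_le [LinearOrder ι] (hx : Antitone x) (v : ι → ℝ) :
    ∃ K > 0, ∀ μ : ι → ℝ, Antitone μ → ∀ p : Equiv.Perm ι, ∃ π : Equiv.Perm ι,
      (∀ i, x (π i) = x i) ∧
      ∑ i, v i * (μ (p i) - x i) - K * ∑ i, (μ (p i) - x i) ^ 2 ≤ ∑ i, v i * (μ (π i) - x i) := by
  obtain ⟨γ, hγ, hgap⟩ := exists_pos_forall_ne_le_abs_sub x
  set M := ∑ i, |v i|
  have hM : 0 ≤ M := sum_nonneg fun i _ => abs_nonneg _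
  refine ⟨4 * M / γ + 1, by positivity, fun μ hμ p => ?_⟩
  set d2 := ∑ i, (μ (p i) - x i) ^ 2
  have hd2 : 0 ≤ d2 := sum_nonneg fun i _ => sq_nonneg _
  set d := √d2
  have hp : ∀ i, |μ (p i) - x i| ≤ d := fun i =>
    Real.abs_le_sqrt (single_le_sum (fun j _ => sq_nonneg (μ (p j) - x j)) (mem_univ i))
  have hid : ∀ i, |μ i - x i| ≤ d := fun i =>
    Real.abs_le_sqrt ((single_le_sum (fun j _ => sq_nonneg (μ j - x j)) (mem_univ i)).trans
      (sum_sq_sub_le_sum_sq_comp_perm_sub hx hμ p))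
  -- Far from `x`, trading `p` for the identity costs `O(d) = O(d² / γ)`; close to `x`, i.e. within
  -- half the gap `γ` between distinct values of `x`, the permutation `p` itself must fix `x`.
  rcases le_or_gt γ (2 * d) with hfar | hclose
  · refine ⟨1, fun _ => rfl, ?_⟩
    have hmove : ∑ i, v i * (μ (p i) - x i) - ∑ i, v i * (μ i - x i) ≤ M * (2 * d) := by
      rw [← sum_sub_distrib, sum_mul]
      refine sum_le_sum fun i _ => ?_
      calc v i * (μ (p i) - x i) - v i * (μ i - x i) = v i * ((μ (p i) - x i) - (μ i - x i)) := by
            ring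
        _ ≤ |v i| * |(μ (p i) - x i) - (μ i - x i)| := by rw [← abs_mul]; exact le_abs_self _
        _ ≤ |v i| * (2 * d) := by
            gcongr
            linarith [abs_sub (μ (p i) - x i) (μ i - x i), hp i, hid i]
    have hd : M * (2 * d) ≤ 4 * M / γ * d2 := by
      rw [← Real.sq_sqrt hd2, div_mul_eq_mul_div, le_div_iff₀ hγ]
      nlinarith [mul_le_mul_of_nonneg_left hfar (mul_nonneg hM (Real.sqrt_nonneg d2))]
    simp only [Equiv.Perm.one_apply]
    linarith [mul_le_mul_of_nonneg_right (le_add_of_nonneg_right zero_le_one :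
      4 * M / γ ≤ 4 * M / γ + 1) hd2]
  · refine ⟨p, fun i => ?_, by nlinarith [mul_nonneg (by positivity : 0 ≤ 4 * M / γ + 1) hd2]⟩
    by_contra hne
    have hpx : |x (p i) - x i| ≤ 2 * d := by
      have := abs_sub (μ (p i) - x i) (μ (p i) - x (p i))
      rw [show μ (p i) - x i - (μ (p i) - x (p i)) = x (p i) - x i by ring] at this
      linarith [hp i, hid (p i)]
    linarith [hgap _ _ hne]

variable [DecidableEq ι] {S : Matrix ι ι ℝ}

theorem sum_sq_sub_le_of_mem_doublyStochastic [LinearOrder ι] (hx : Antitone x) (hμ : Antitone μ)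
    (hS : S ∈ doublyStochastic ℝ ι) :
    ∑ i, (μ i - x i) ^ 2 ≤ ∑ k, ∑ l, (μ l - x k) ^ 2 * S k l := by
  obtain ⟨σ, hσ⟩ :=
    exists_perm_sum_mul_le_of_mem_doublyStochastic hS fun k l => -(μ l - x k) ^ 2
  simp only [neg_mul, sum_neg_distrib, neg_le_neg_iff] at hσ
  exact (sum_sq_sub_le_sum_sq_comp_perm_sub hx hμ σ).trans hσ

theorem exists_fixing_perm_sum_mul_le_of_mem_doublyStochastic {v : ι → ℝ} {K : ℝ}
    (hK : ∀ p : Equiv.Perm ι, ∃ π : Equiv.Perm ι, (∀ i, x (π i) = x i) ∧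
      ∑ i, v i * (μ (p i) - x i) - K * ∑ i, (μ (p i) - x i) ^ 2 ≤ ∑ i, v i * (μ (π i) - x i))
    (hS : S ∈ doublyStochastic ℝ ι) :
    ∃ π : Equiv.Perm ι, (∀ i, x (π i) = x i) ∧
      ∑ k, ∑ l, v k * (μ l - x k) * S k l - K * ∑ k, ∑ l, (μ l - x k) ^ 2 * S k l
        ≤ ∑ i, v i * (μ (π i) - x i) := by
  obtain ⟨σ, hσ⟩ := exists_perm_sum_mul_le_of_mem_doublyStochastic hS
    fun k l => v k * (μ l - x k) - K * (μ l - x k) ^ 2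
  obtain ⟨π, hπx, hπ⟩ := hK σ
  refine ⟨π, hπx, ?_⟩
  calc ∑ k, ∑ l, v k * (μ l - x k) * S k l - K * ∑ k, ∑ l, (μ l - x k) ^ 2 * S k l
      = ∑ k, ∑ l, (v k * (μ l - x k) - K * (μ l - x k) ^ 2) * S k l := by
        simp only [mul_sum, ← sum_sub_distrib, sub_mul, mul_assoc]
    _ ≤ ∑ i, (v i * (μ (σ i) - x i) - K * (μ (σ i) - x i) ^ 2) := hσ
    _ = ∑ i, v i * (μ (σ i) - x i) - K * ∑ i, (μ (σ i) - x i) ^ 2 := by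
        rw [mul_sum, ← sum_sub_distrib]
    _ ≤ ∑ i, v i * (μ (π i) - x i) := hπ

end FixingPerm

theorem exists_perm_comp_eigd_le_trace {n : ℕ} {X Y U : Matrix (Fin n) (Fin n) ℝ}
    {x v : Fin n → ℝ} {K : ℝ} (hx : Antitone x) (hY : Y.IsHermitian) (hU : U * Uᵀ = 1)
    (hUX : U * diagonal x * Uᵀ = X)
    (hK : ∀ p : Equiv.Perm (Fin n), ∃ π : Equiv.Perm (Fin n), (∀ i, x (π i) = x i) ∧
      ∑ i, v i * (eigd Y (p i) - x i) - K * ∑ i, (eigd Y (p i) - x i) ^ 2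
        ≤ ∑ i, v i * (eigd Y (π i) - x i)) :
    ∃ π : Equiv.Perm (Fin n),
      ∑ i, (eigd Y (π i) - x i) ^ 2 ≤ ((Y - X)ᵀ * (Y - X)).trace ∧
      (U * diagonal v * Uᵀ * (Y - X)).trace - K * ((Y - X)ᵀ * (Y - X)).trace
        ≤ ∑ i, v i * (eigd Y (π i) - x i) := by
  obtain ⟨W, hW, hWY⟩ := exists_orthogonal_eq_eigd hY
  have hQ : (Uᵀ * W) * (Uᵀ * W)ᵀ = 1 := by
    rw [transpose_mul, transpose_transpose, Matrix.mul_assoc, ← Matrix.mul_assoc W, hW,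
      Matrix.one_mul, mul_eq_one_comm.mp hU]
  have hS := sq_entries_mem_doublyStochastic hQ
  have hT := trace_transpose_mul_self_sub_eq hU hW x (eigd Y)
  have hV := trace_conj_diagonal_mul_sub_eq hU hW x (eigd Y) v
  rw [← hWY, hUX] at hT hV
  obtain ⟨π, hπx, hπ⟩ := exists_fixing_perm_sum_mul_le_of_mem_doublyStochastic hK hS
  refine ⟨π, ?_, by simpa only [hT, hV, of_apply] using hπ⟩
  calc ∑ i, (eigd Y (π i) - x i) ^ 2 = ∑ i, (eigd Y (π i) - x (π i)) ^ 2 := by simp only [hπx]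
    _ = ∑ i, (eigd Y i - x i) ^ 2 := Equiv.sum_comp π fun i => (eigd Y i - x i) ^ 2
    _ ≤ _ := by
      simpa only [hT, of_apply] using
        sum_sq_sub_le_of_mem_doublyStochastic hx (eigd_antitone hY) hS

theorem statement12_general {n : ℕ} (f : (Fin n → ℝ) → EReal)
    (hsym : IsSymmFn f)
    (X : Matrix (Fin n) (Fin n) ℝ) (hX : X.IsHermitian)
    (v : Fin n → ℝ) (hv : FSubV f (eigd X) v)
    (U : Matrix (Fin n) (Fin n) ℝ) (hU : U * Uᵀ = 1)
    (hUX : U * Matrix.diagonal (eigd X) * Uᵀ = X) :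
    FSubM (fun M => f (eigd M)) X (U * Matrix.diagonal v * Uᵀ) := by
  obtain ⟨K, hK, hbound⟩ := exists_fixing_perm_sum_mul_le (eigd_antitone hX) v
  intro ε hε
  obtain ⟨δ, hδ, hfδ⟩ := hv (ε / 2) (by positivity)
  refine ⟨min δ (ε / (2 * K)), by positivity, fun Y hY hYX => ?_⟩
  obtain ⟨π, hnorm, hinner⟩ :=
    exists_perm_comp_eigd_le_trace (eigd_antitone hX) hY hU hUX (hbound _ (eigd_antitone hY))
  set T := ((Y - X)ᵀ * (Y - X)).trace
  set y : Fin n → ℝ := fun i => eigd Y (π i)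
  have hy : √(∑ i, (y i - eigd X i) ^ 2) ≤ √T := Real.sqrt_le_sqrt hnorm
  have hKT : K * T ≤ ε / 2 * √T := by
    have hT : 0 ≤ T := (sum_nonneg fun i _ => sq_nonneg _).trans hnorm
    have : 2 * K * √T ≤ ε := (le_div_iff₀' (by positivity)).mp (hYX.trans (min_le_right _ _))
    calc K * T = K * √T * √T := by rw [mul_assoc, Real.mul_self_sqrt hT]
      _ ≤ ε / 2 * √T := by gcongr; linarith
  calc f (eigd X) + (((U * diagonal v * Uᵀ * (Y - X)).trace - ε * √T : ℝ) : EReal)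
      ≤ f (eigd X) + ((∑ i, v i * (y i - eigd X i) - ε / 2 * √(∑ i, (y i - eigd X i) ^ 2) : ℝ)
        : EReal) := by
        refine add_le_add_right (EReal.coe_le_coe_iff.mpr ?_) _
        linarith [mul_le_mul_of_nonneg_left hy (by positivity : 0 ≤ ε / 2)]
    _ ≤ f y := hfδ y (hy.trans (hYX.trans (min_le_left _ _)))
    _ = f (eigd Y) := hsym π _

/-- If `f` is lsc, symmetric, lower-bounded, `f(λ(X))` is finite, `v` is a Fréchet
subgradient of `f` at `λ(X)` and `U` is orthogonal with `U Diag(λ(X)) Uᵀ = X`, then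
`U (Diag v) Uᵀ` is a Fréchet subgradient of `f∘λ` at `X`. -/
theorem statement12 {n : ℕ} (f : (Fin n → ℝ) → EReal)
    (hlsc : LowerSemicontinuous f) (hsym : IsSymmFn f)
    (hbdd : ∃ c : ℝ, ∀ y, (c : EReal) ≤ f y)
    (X : Matrix (Fin n) (Fin n) ℝ) (hX : X.IsHermitian)
    (fx : ℝ) (hfx : f (eigd X) = (fx : EReal))
    (v : Fin n → ℝ) (hv : FSubV f (eigd X) v)
    (U : Matrix (Fin n) (Fin n) ℝ) (hU : U * Uᵀ = 1)
    (hUX : U * Matrix.diagonal (eigd X) * Uᵀ = X) :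
    FSubM (fun M => f (eigd M)) X (U * Matrix.diagonal v * Uᵀ) :=
  statement12_general f hsym X hX v hv U hU hUX
end
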